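/- In the Samelson setup, let I be a subset of the simple roots, let Δ_I ⊆ Δ⁺ be the set of positive roots supported on I, and set 𝔥_I := 𝔥 ⊕ ⨁_{α ∈ Δ_I} (𝔤_α ⊕ 𝔤_{−α}) and 𝔭 := ⨁_{α ∈ Δ⁺ \ Δ_I} (𝔤_α ⊕ 𝔤_{−α}). Then the Bismut torsion satisfies T(X, Y, Z) = 0 for all X, Y ∈ 𝔥_I and Z ∈ 𝔭. (This is the purely algebraic claim behind the Hermitian submersion G → G/H_I of the paper's final corollary.) -/

import Mathlib

/-- The Samelson setup: a finite-dimensional complex semisimple Lie algebra `L` with a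
Cartan subalgebra `H`, root system `Δ` (with values in an additive group `R` of weights),
a choice of positive roots `pos` with simple roots, root spaces, the decomposition into
simple ideals, the left-invariant metric `G` determined by constants `lam i > 0` and
`c α > 0`, a Samelson complex structure `J`, and the Killing form `killingForm ℂ L`. -/
structure SamelsonSetup (R L : Type) [AddCommGroup R] [LieRing L] [LieAlgebra ℂ L] where
  finiteDim : FiniteDimensional ℂ L
  semisimple : LieAlgebra.IsSemisimple ℂ L
  /-- the Cartan subalgebra 𝔥 -/
  H : LieSubalgebra ℂ L
  cartan : H.IsCartanSubalgebra
  /-- the root system Δ ⊆ 𝔥* -/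
  Δ : Set R
  /-- the positive roots Δ⁺ -/
  pos : Set R
  Δ_finite : Δ.Finite
  pos_subset : pos ⊆ Δ
  zero_not_mem : (0 : R) ∉ Δ
  neg_mem : ∀ a ∈ Δ, -a ∈ Δ
  pos_or_neg : ∀ a ∈ Δ, a ∈ pos ∨ -a ∈ pos
  not_pos_and_neg : ∀ a ∈ pos, -a ∉ pos
  /-- the number of simple roots (= rank) -/
  r : ℕ
  /-- the simple roots α₁, …, α_r -/
  simple : Fin r → R
  simple_mem : ∀ j, simple j ∈ pos
  /-- the coefficients of a positive root as an ℕ-linear combination of simple roots -/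
  coeff : R → Fin r → ℕ
  coeff_spec : ∀ a ∈ pos, a = ∑ j, coeff a j • simple j
  coeff_unique : ∀ a ∈ pos, ∀ k : Fin r → ℕ, a = ∑ j, k j • simple j → k = coeff a
  descent : ∀ a ∈ pos, (∀ j, a ≠ simple j) → ∃ j, ∃ b ∈ pos, a = simple j + b
  /-- the root spaces 𝔤_α (with 𝔤₀ = 𝔥) -/
  rootSpace : R → Submodule ℂ L
  rootSpace_zero : rootSpace 0 = H.toSubmodule
  rootSpace_eq_bot : ∀ a : R, a ≠ 0 → a ∉ Δ → rootSpace a = ⊥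
  bracket_mem : ∀ (a b : R), ∀ X ∈ rootSpace a, ∀ Y ∈ rootSpace b, ⁅X, Y⁆ ∈ rootSpace (a + b)
  rootSpace_sup : (⨆ a ∈ insert (0 : R) Δ, rootSpace a) = ⊤
  rootSpace_indep : iSupIndep fun a : ↥(insert (0 : R) Δ) => rootSpace a.1
  /-- the number of simple ideals -/
  s : ℕ
  /-- the simple ideals 𝔤₁, …, 𝔤_s -/
  ideal : Fin s → LieIdeal ℂ L
  ideal_simple : ∀ i, LieAlgebra.IsSimple ℂ (ideal i)
  ideal_sup : (⨆ i, ideal i) = ⊤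
  ideal_indep : iSupIndep ideal
  /-- the simple ideal a root belongs to -/
  idealOf : R → Fin s
  idealOf_neg : ∀ a, idealOf (-a) = idealOf a
  rootSpace_le_ideal : ∀ a ∈ Δ, ∀ X ∈ rootSpace a, X ∈ ideal (idealOf a)
  /-- the positive constants λᵢ -/
  lam : Fin s → ℝ
  lam_pos : ∀ i, 0 < lam i
  /-- the positive constants c_α, with c_{-α} = c_α -/
  c : R → ℝ
  c_pos : ∀ a ∈ Δ, 0 < c a
  c_neg : ∀ a : R, c (-a) = c a
  /-- the metric g -/
  G : LinearMap.BilinForm ℂ L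
  G_symm : ∀ X Y, G X Y = G Y X
  G_H : ∀ i : Fin s, ∀ X Y : L, X ∈ H → X ∈ ideal i → Y ∈ H → Y ∈ ideal i →
    G X Y = -(lam i : ℂ) * killingForm ℂ L X Y
  G_root : ∀ a ∈ Δ, ∀ X ∈ rootSpace a, ∀ Y ∈ rootSpace (-a),
    G X Y = -(lam (idealOf a) : ℂ) * (c a : ℂ) * killingForm ℂ L X Y
  G_roots_ne : ∀ a ∈ Δ, ∀ b ∈ Δ, a + b ≠ 0 →
    ∀ X ∈ rootSpace a, ∀ Y ∈ rootSpace b, G X Y = 0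
  G_H_root : ∀ a ∈ Δ, ∀ X ∈ H, ∀ Y ∈ rootSpace a, G X Y = 0
  G_ideal_ne : ∀ i j : Fin s, i ≠ j → ∀ X ∈ ideal i, ∀ Y ∈ ideal j, G X Y = 0
  /-- the Samelson complex structure J -/
  J : L →ₗ[ℂ] L
  J_H : ∀ X ∈ H, J X ∈ H
  J_J_H : ∀ X ∈ H, J (J X) = -X
  J_pos : ∀ a ∈ pos, ∀ X ∈ rootSpace a, J X = Complex.I • X
  J_neg : ∀ a ∈ pos, ∀ X ∈ rootSpace (-a), J X = -(Complex.I • X)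

namespace SamelsonSetup

variable {R L : Type} [AddCommGroup R] [LieRing L] [LieAlgebra ℂ L]

/-- The Nomizu form of the Bismut connection:
Φ(X,Y,Z) = ½( g([X,Y],Z) + g([Z,X],Y) − g([Y,Z],X)
            − g([JX,JY],Z) − g([JZ,JX],Y) − g([JY,JZ],X) ). -/
noncomputable def Phi (S : SamelsonSetup R L) (X Y Z : L) : ℂ :=
  (1 / 2 : ℂ) * (S.G ⁅X, Y⁆ Z + S.G ⁅Z, X⁆ Y - S.G ⁅Y, Z⁆ X
    - S.G ⁅S.J X, S.J Y⁆ Z - S.G ⁅S.J Z, S.J X⁆ Y - S.G ⁅S.J Y, S.J Z⁆ X)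

/-- The Bismut torsion: T(X,Y,Z) = −g([JX,JY],Z) − g([JY,JZ],X) − g([JZ,JX],Y). -/
noncomputable def T (S : SamelsonSetup R L) (X Y Z : L) : ℂ :=
  -S.G ⁅S.J X, S.J Y⁆ Z - S.G ⁅S.J Y, S.J Z⁆ X - S.G ⁅S.J Z, S.J X⁆ Y

end SamelsonSetup

namespace SamelsonSetup

variable {R L : Type} [AddCommGroup R] [LieRing L] [LieAlgebra ℂ L]

/-- The set Δ_I of positive roots supported on a set `I` of simple roots. -/
def DeltaI (S : SamelsonSetup R L) (I : Set (Fin S.r)) : Set R :=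
  {a | a ∈ S.pos ∧ ∀ j ∉ I, S.coeff a j = 0}

/-- The subalgebra 𝔥_I = 𝔥 ⊕ ⨁_{α ∈ Δ_I} (𝔤_α ⊕ 𝔤_{−α}), as a subspace of 𝔤. -/
def hI (S : SamelsonSetup R L) (I : Set (Fin S.r)) : Submodule ℂ L :=
  S.H.toSubmodule ⊔ ⨆ a ∈ S.DeltaI I, (S.rootSpace a ⊔ S.rootSpace (-a))

/-- The complement 𝔭 = ⨁_{α ∈ Δ⁺ \ Δ_I} (𝔤_α ⊕ 𝔤_{−α}), as a subspace of 𝔤. -/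
def pI (S : SamelsonSetup R L) (I : Set (Fin S.r)) : Submodule ℂ L :=
  ⨆ a ∈ S.pos \ S.DeltaI I, (S.rootSpace a ⊔ S.rootSpace (-a))

end SamelsonSetup

/-! The weights of `𝔥_I`, i.e. `0` and `±Δ_I`, form a symmetric subset `A` of `{0} ∪ Δ` that is
closed under sums which are again weights, because the simple-root coefficients of positive roots
are additive. Hence `𝔨 := ⨁_{a ∈ A} 𝔤_a` is a subalgebra and `𝔪 := ⨁_{a ∈ ({0} ∪ Δ) \ A} 𝔤_a` is a
`𝔨`-module; both are `J`-invariant, and `g(𝔨, 𝔪) = 0` because `g` pairs `𝔤_a` only with `𝔤_{-a}`.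
So in each term of `T(X, Y, Z)` a bracket in `𝔨` is paired with `𝔪`, or one in `𝔪` with `𝔨`. -/

theorem Submodule.apply_mem_of_mem_biSup {R M N P ι κ : Type*} [CommSemiring R]
    [AddCommMonoid M] [AddCommMonoid N] [AddCommMonoid P] [Module R M] [Module R N]
    [Module R P] {f : M →ₗ[R] N →ₗ[R] P} {p : ι → Submodule R M} {q : κ → Submodule R N}
    {A : Set ι} {B : Set κ} {K : Submodule R P}
    (h : ∀ a ∈ A, ∀ b ∈ B, ∀ x ∈ p a, ∀ y ∈ q b, f x y ∈ K)
    {x : M} {y : N} (hx : x ∈ ⨆ a ∈ A, p a) (hy : y ∈ ⨆ b ∈ B, q b) : f x y ∈ K := by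
  have hle : map₂ f (⨆ a ∈ A, p a) (⨆ b ∈ B, q b) ≤ K := by
    simp only [map₂_iSup_left, map₂_iSup_right, iSup_le_iff]
    exact fun b hb a ha => map₂_le.mpr (h a ha b hb)
  exact map₂_le.mp hle x hx y hy

namespace SamelsonSetup

variable {R L : Type} [AddCommGroup R] [LieRing L] [LieAlgebra ℂ L] (S : SamelsonSetup R L)

section Torsion

variable {K M : Submodule ℂ L}

theorem T_eq_zero_of_mem (hJK : ∀ X ∈ K, S.J X ∈ K) (hJM : ∀ Z ∈ M, S.J Z ∈ M)
    (hKK : ∀ X ∈ K, ∀ Y ∈ K, ⁅X, Y⁆ ∈ K) (hKM : ∀ X ∈ K, ∀ Z ∈ M, ⁅X, Z⁆ ∈ M)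
    (hG : ∀ X ∈ K, ∀ Z ∈ M, S.G X Z = 0) {X Y Z : L} (hX : X ∈ K) (hY : Y ∈ K) (hZ : Z ∈ M) :
    S.T X Y Z = 0 := by
  have hXY : S.G ⁅S.J X, S.J Y⁆ Z = 0 := hG _ (hKK _ (hJK X hX) _ (hJK Y hY)) Z hZ
  have hYZ : S.G ⁅S.J Y, S.J Z⁆ X = 0 := by
    rw [S.G_symm]
    exact hG X hX _ (hKM _ (hJK Y hY) _ (hJM Z hZ))
  have hZX : S.G ⁅S.J Z, S.J X⁆ Y = 0 := by
    rw [S.G_symm, ← lie_skew, map_neg, hG Y hY _ (hKM _ (hJK X hX) _ (hJM Z hZ)), neg_zero]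
  simp only [T, hXY, hYZ, hZX, neg_zero, sub_zero]

end Torsion

theorem eq_zero_of_mem_rootSpace {a : R} (ha0 : a ≠ 0) (ha : a ∉ S.Δ) {X : L}
    (hX : X ∈ S.rootSpace a) : X = 0 := by
  rwa [S.rootSpace_eq_bot a ha0 ha, Submodule.mem_bot] at hX

theorem J_mem_rootSpace (a : R) {X : L} (hX : X ∈ S.rootSpace a) : S.J X ∈ S.rootSpace a := by
  by_cases ha0 : a = 0
  · subst ha0
    rw [S.rootSpace_zero] at hX ⊢
    exact S.J_H X hX
  by_cases ha : a ∈ S.Δ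
  · rcases S.pos_or_neg a ha with hpos | hneg
    · rw [S.J_pos a hpos X hX]
      exact Submodule.smul_mem _ _ hX
    · rw [← neg_neg a] at hX ⊢
      rw [S.J_neg (-a) hneg X hX]
      exact Submodule.neg_mem _ (Submodule.smul_mem _ _ hX)
  · rw [S.eq_zero_of_mem_rootSpace ha0 ha hX, map_zero]
    exact Submodule.zero_mem _

theorem G_eq_zero_of_mem_rootSpace {a b : R} (hab : a + b ≠ 0) {X Y : L}
    (hX : X ∈ S.rootSpace a) (hY : Y ∈ S.rootSpace b) : S.G X Y = 0 := by
  by_cases ha0 : a = 0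
  · subst ha0
    have hb0 : b ≠ 0 := by simpa using hab
    by_cases hb : b ∈ S.Δ
    · rw [S.rootSpace_zero] at hX
      exact S.G_H_root b hb X hX Y hY
    · rw [S.eq_zero_of_mem_rootSpace hb0 hb hY, map_zero]
  by_cases ha : a ∈ S.Δ
  · by_cases hb0 : b = 0
    · subst hb0
      rw [S.rootSpace_zero] at hY
      rw [S.G_symm]
      exact S.G_H_root a ha Y hY X hX
    by_cases hb : b ∈ S.Δ
    · exact S.G_roots_ne a ha b hb hab X hX Y hY
    · rw [S.eq_zero_of_mem_rootSpace hb0 hb hY, map_zero]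
  · rw [S.eq_zero_of_mem_rootSpace ha0 ha hX, map_zero, LinearMap.zero_apply]

section RootSpan

def rootSpan (A : Set R) : Submodule ℂ L :=
  ⨆ a ∈ A, S.rootSpace a

variable {S} {A B C : Set R}

theorem rootSpace_le_rootSpan {a : R} (ha : a ∈ A) : S.rootSpace a ≤ S.rootSpan A :=
  le_iSup₂ (f := fun a _ => S.rootSpace a) a ha

theorem rootSpace_le_rootSpan_of_mem_insert {a : R} (ha : a ∈ insert 0 S.Δ → a ∈ A) :
    S.rootSpace a ≤ S.rootSpan A := by
  by_cases hw : a ∈ insert 0 S.Δ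
  · exact rootSpace_le_rootSpan (ha hw)
  · rw [S.rootSpace_eq_bot a (fun h => hw (Or.inl h)) (fun h => hw (Or.inr h))]
    exact bot_le

theorem J_mem_rootSpan {X : L} (hX : X ∈ S.rootSpan A) : S.J X ∈ S.rootSpan A := by
  have hle : S.rootSpan A ≤ (S.rootSpan A).comap S.J :=
    iSup₂_le fun a ha X hX => rootSpace_le_rootSpan ha (S.J_mem_rootSpace a hX)
  exact hle hX

theorem lie_mem_rootSpan (h : ∀ a ∈ A, ∀ b ∈ B, a + b ∈ insert 0 S.Δ → a + b ∈ C) {X Y : L}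
    (hX : X ∈ S.rootSpan A) (hY : Y ∈ S.rootSpan B) : ⁅X, Y⁆ ∈ S.rootSpan C :=
  Submodule.apply_mem_of_mem_biSup (f := (LieModule.toEnd ℂ L L : L →ₗ[ℂ] Module.End ℂ L))
    (fun a ha b hb x hx y hy =>
      rootSpace_le_rootSpan_of_mem_insert (h a ha b hb) (S.bracket_mem a b x hx y hy)) hX hY

theorem G_eq_zero_of_mem_rootSpan (h : ∀ a ∈ A, ∀ b ∈ B, a + b ≠ 0) {X Y : L}
    (hX : X ∈ S.rootSpan A) (hY : Y ∈ S.rootSpan B) : S.G X Y = 0 :=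
  Submodule.mem_bot ℂ |>.mp <| Submodule.apply_mem_of_mem_biSup
    (fun a ha b hb _ hx _ hy => (Submodule.mem_bot ℂ).mpr
      (S.G_eq_zero_of_mem_rootSpace (h a ha b hb) hx hy)) hX hY

theorem T_eq_zero_of_mem_rootSpan (hadd : ∀ a ∈ A, ∀ b ∈ A, a + b ∈ insert 0 S.Δ → a + b ∈ A)
    (hneg : ∀ a ∈ A, -a ∈ A) {X Y Z : L} (hX : X ∈ S.rootSpan A) (hY : Y ∈ S.rootSpan A)
    (hZ : Z ∈ S.rootSpan (insert 0 S.Δ \ A)) : S.T X Y Z = 0 := by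
  have hmod : ∀ a ∈ A, ∀ b ∈ insert 0 S.Δ \ A, a + b ∈ insert 0 S.Δ →
      a + b ∈ insert 0 S.Δ \ A := fun a ha b hb hab =>
    ⟨hab, fun h => hb.2 (by simpa using hadd _ h (-a) (hneg a ha) (by simpa using hb.1))⟩
  have horth : ∀ a ∈ A, ∀ b ∈ insert 0 S.Δ \ A, a + b ≠ 0 := fun a ha b hb h =>
    hb.2 (by rw [eq_neg_of_add_eq_zero_right h]; exact hneg a ha)
  exact S.T_eq_zero_of_mem (fun _ => J_mem_rootSpan) (fun _ => J_mem_rootSpan)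
    (fun _ hX _ hY => lie_mem_rootSpan hadd hX hY) (fun _ hX _ hZ => lie_mem_rootSpan hmod hX hZ)
    (fun _ hX _ hZ => G_eq_zero_of_mem_rootSpan horth hX hZ) hX hY hZ

end RootSpan

section PositiveRoots

variable {S} {I : Set (Fin S.r)} {p q : R}

theorem coeff_add (hp : p ∈ S.pos) (hq : q ∈ S.pos) (hpq : p + q ∈ S.pos) :
    S.coeff (p + q) = S.coeff p + S.coeff q := by
  refine (S.coeff_unique _ hpq _ ?_).symm
  simp only [Pi.add_apply, add_smul, Finset.sum_add_distrib, ← S.coeff_spec p hp,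
    ← S.coeff_spec q hq]

theorem neg_add_notMem_pos (hp : p ∈ S.pos) (hq : q ∈ S.pos) : -(p + q) ∉ S.pos := by
  intro hn
  -- Writing `p = p + (-(p + q)) + p + q` forces every coefficient of `p` to vanish.
  have hcoeff := S.coeff_unique p hp (S.coeff p + S.coeff (-(p + q)) + S.coeff p + S.coeff q) <| by
    simp only [Pi.add_apply, add_smul, Finset.sum_add_distrib, ← S.coeff_spec p hp,
      ← S.coeff_spec q hq, ← S.coeff_spec _ hn]
    abel
  have hp0 : p = 0 := by
    rw [S.coeff_spec p hp]
    refine Finset.sum_eq_zero fun j _ => ?_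
    have := congrFun hcoeff j
    simp only [Pi.add_apply] at this
    rw [show S.coeff p j = 0 by omega, zero_smul]
  exact S.zero_not_mem (hp0 ▸ S.pos_subset hp)

theorem add_mem_pos (hp : p ∈ S.pos) (hq : q ∈ S.pos) (hpq : p + q ∈ S.Δ) : p + q ∈ S.pos :=
  (S.pos_or_neg _ hpq).resolve_right (neg_add_notMem_pos hp hq)

theorem add_mem_DeltaI (hp : p ∈ S.DeltaI I) (hq : q ∈ S.DeltaI I) (hpq : p + q ∈ S.Δ) :
    p + q ∈ S.DeltaI I := by
  have hpos := add_mem_pos hp.1 hq.1 hpq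
  refine ⟨hpos, fun j hj => ?_⟩
  rw [coeff_add hp.1 hq.1 hpos, Pi.add_apply, hp.2 j hj, hq.2 j hj]

theorem mem_DeltaI_of_add_mem (hp : p ∈ S.pos) (hq : q ∈ S.pos) (hpq : p + q ∈ S.DeltaI I) :
    p ∈ S.DeltaI I := by
  refine ⟨hp, fun j hj => ?_⟩
  have := congrFun (coeff_add hp hq hpq.1) j
  have := hpq.2 j hj
  simp only [Pi.add_apply] at *
  omega

theorem add_neg_mem_DeltaI (hp : p ∈ S.DeltaI I) (hq : q ∈ S.DeltaI I) (hpq : p + -q ∈ S.Δ) :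
    p + -q ∈ S.DeltaI I ∨ -(p + -q) ∈ S.DeltaI I := by
  rcases S.pos_or_neg _ hpq with hpos | hneg
  · exact Or.inl (mem_DeltaI_of_add_mem hpos hq.1 (by rwa [neg_add_cancel_right]))
  · refine Or.inr (mem_DeltaI_of_add_mem hneg hp.1 ?_)
    rwa [neg_add_rev, neg_neg, neg_add_cancel_right]

end PositiveRoots

def hIWeights (I : Set (Fin S.r)) : Set R :=
  {a | a = 0 ∨ a ∈ S.DeltaI I ∨ -a ∈ S.DeltaI I}

section hIWeights

variable {S} {I : Set (Fin S.r)}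

theorem neg_mem_hIWeights {a : R} (ha : a ∈ S.hIWeights I) : -a ∈ S.hIWeights I := by
  rcases ha with rfl | ha | ha
  · exact Or.inl neg_zero
  · exact Or.inr (Or.inr (by rwa [neg_neg]))
  · exact Or.inr (Or.inl ha)

theorem add_mem_hIWeights {a b : R} (ha : a ∈ S.hIWeights I) (hb : b ∈ S.hIWeights I)
    (hab : a + b ∈ insert 0 S.Δ) : a + b ∈ S.hIWeights I := by
  rcases hab with hab | hab
  · exact Or.inl hab
  rcases ha with rfl | ha | ha
  · rwa [zero_add]
  all_goals rcases hb with rfl | hb | hb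
  · rw [add_zero]; exact Or.inr (Or.inl ha)
  · exact Or.inr (Or.inl (add_mem_DeltaI ha hb hab))
  · have h := add_neg_mem_DeltaI ha hb (by rwa [neg_neg])
    rw [neg_neg] at h
    exact Or.inr h
  · rw [add_zero]; exact Or.inr (Or.inr ha)
  · rw [add_comm] at hab ⊢
    have h := add_neg_mem_DeltaI hb ha (by rwa [neg_neg])
    rw [neg_neg] at h
    exact Or.inr h
  · refine Or.inr (Or.inr ?_)
    rw [neg_add]
    exact add_mem_DeltaI ha hb (by rw [← neg_add]; exact S.neg_mem _ hab)

theorem notMem_hIWeights {a : R} (ha : a ∈ S.pos \ S.DeltaI I) : a ∉ S.hIWeights I := by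
  rintro (h0 | hI | hI)
  · exact S.zero_not_mem (h0 ▸ S.pos_subset ha.1)
  · exact ha.2 hI
  · exact S.not_pos_and_neg a ha.1 hI.1

theorem hI_le_rootSpan : S.hI I ≤ S.rootSpan (S.hIWeights I) := by
  refine sup_le ?_ (iSup₂_le fun a ha => sup_le ?_ ?_)
  · rw [← S.rootSpace_zero]
    exact rootSpace_le_rootSpan (Or.inl rfl)
  · exact rootSpace_le_rootSpan (Or.inr (Or.inl ha))
  · exact rootSpace_le_rootSpan (Or.inr (Or.inr (by rwa [neg_neg])))

theorem pI_le_rootSpan : S.pI I ≤ S.rootSpan (insert 0 S.Δ \ S.hIWeights I) := by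
  refine iSup₂_le fun a ha => sup_le ?_ ?_
  · exact rootSpace_le_rootSpan ⟨Or.inr (S.pos_subset ha.1), notMem_hIWeights ha⟩
  · refine rootSpace_le_rootSpan ⟨Or.inr (S.neg_mem _ (S.pos_subset ha.1)), fun h => ?_⟩
    exact notMem_hIWeights ha (by simpa using neg_mem_hIWeights h)

end hIWeights

end SamelsonSetup

/-- For any subset I of the simple roots, the Bismut torsion satisfies
T(X, Y, Z) = 0 for all X, Y ∈ 𝔥_I and Z ∈ 𝔭. -/
theorem bismut_torsion_vanishes_hI_hI_p {R L : Type} [AddCommGroup R] [LieRing L]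
    [LieAlgebra ℂ L] (S : SamelsonSetup R L) (I : Set (Fin S.r))
    (X Y Z : L) (hX : X ∈ S.hI I) (hY : Y ∈ S.hI I) (hZ : Z ∈ S.pI I) :
    S.T X Y Z = 0 :=
  S.T_eq_zero_of_mem_rootSpan (fun _ ha _ hb => SamelsonSetup.add_mem_hIWeights ha hb)
    (fun _ => SamelsonSetup.neg_mem_hIWeights) (SamelsonSetup.hI_le_rootSpan hX)
    (SamelsonSetup.hI_le_rootSpan hY) (SamelsonSetup.pI_le_rootSpan hZ)
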